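/- The number of involutions in S_n whose descent set is contained in K = {k_1 < k_2 < ... < k_r = n} equals the number of symmetric r×r matrices with nonnegative integer entries whose i-th row sum is k_i - k_{i-1} (with k_0 = 0). -/

import Mathlib

set_option linter.unusedSectionVars false

/-- The value of `π` at the (0-indexed) position `i`, extended by `0` outside the range. -/
def permVal (n : ℕ) (π : Equiv.Perm (Fin n)) (i : ℕ) : ℕ :=
  if h : i < n then (π ⟨i, h⟩ : ℕ) else 0

/-- The descent set of `π ∈ S_n` (with the convention that `n` is always a descent). -/
def descentSet (n : ℕ) (π : Equiv.Perm (Fin n)) : Finset ℕ :=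
  insert n ((Finset.Ico 1 n).filter fun i => permVal n π i < permVal n π (i - 1))

namespace S6

/-! ### Generic ℕ lemmas -/

/-- A downward closed finset of naturals is an initial segment. -/
lemma dclosed_eq_range (S : Finset ℕ) (h : ∀ a b : ℕ, a ≤ b → b ∈ S → a ∈ S) :
    S = Finset.range S.card := by
  ext x
  simp only [Finset.mem_range]
  constructor
  · intro hx
    have hsub : Finset.range (x + 1) ⊆ S := by
      intro y hy
      exact h y x (by simpa using Nat.lt_succ_iff.mp (Finset.mem_range.mp hy)) hx
    have := Finset.card_le_card hsub
    simpa using this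
  · intro hx
    by_contra hxS
    have hsub : S ⊆ Finset.range x := by
      intro y hy
      simp only [Finset.mem_range]
      by_contra hyx
      exact hxS (h x y (by omega) hy)
    have := Finset.card_le_card hsub
    simp at this
    omega

lemma chain (f : ℕ → ℕ) (lo m : ℕ)
    (hmono : ∀ x, lo ≤ x → x + 1 < lo + m → f x < f (x + 1)) :
    ∀ u v, lo ≤ u → u ≤ v → v < lo + m → f u + (v - u) ≤ f v := by
  intro u v hu huv hv
  induction v, huv using Nat.le_induction with
  | base => simp
  | succ w hw ih =>
    have hmw := hmono w (le_trans hu hw) hv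
    have := ih (by omega)
    omega

lemma shift (f : ℕ → ℕ) (lo lo' m : ℕ)
    (hmono : ∀ x, lo ≤ x → x + 1 < lo + m → f x < f (x + 1))
    (hrange : ∀ x, lo ≤ x → x < lo + m → lo' ≤ f x ∧ f x < lo' + m)
    (x : ℕ) (hx1 : lo ≤ x) (hx2 : x < lo + m) : f x = lo' + (x - lo) := by
  have hm : 0 < m := by omega
  have h0 := hrange lo le_rfl (by omega)
  have hc1 := chain f lo m hmono lo x le_rfl hx1 hx2
  have htop := hrange (lo + m - 1) (by omega) (by omega)
  have hc2 := chain f lo m hmono x (lo + m - 1) hx1 (by omega) (by omega)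
  omega

/-! ### Blocks -/

variable {r : ℕ}

/-- `k` extended to all of ℕ by `n`. -/
def kf (n : ℕ) (k : Fin r → ℕ) (i : ℕ) : ℕ := if h : i < r then k ⟨i, h⟩ else n

/-- Block boundaries: `bd 0 = 0`, `bd (i+1) = kf i`. -/
def bd (n : ℕ) (k : Fin r → ℕ) : ℕ → ℕ
  | 0 => 0
  | i + 1 => kf n k i

lemma exists_blk (n : ℕ) (k : Fin r → ℕ) (a : ℕ) : ∃ i, a < kf n k i ∨ r ≤ i :=
  ⟨r, Or.inr le_rfl⟩

/-- The block containing a position `a`. -/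
def blk (n : ℕ) (k : Fin r → ℕ) (a : ℕ) : ℕ := Nat.find (exists_blk n k a)

section Basic

variable {n : ℕ} {k : Fin r → ℕ}

lemma kf_lt_kf (hk : StrictMono k) {i j : ℕ} (hij : i < j) (hj : j < r) :
    kf n k i < kf n k j := by
  rw [kf, kf, dif_pos hj, dif_pos (lt_trans hij hj)]
  exact hk hij

lemma kf_rm1 (hr : 0 < r) (hlast : k ⟨r - 1, Nat.sub_lt hr one_pos⟩ = n) :
    kf n k (r - 1) = n := by
  rw [kf, dif_pos (Nat.sub_lt hr one_pos)]; exact hlast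

lemma kf_le (hr : 0 < r) (hk : StrictMono k)
    (hlast : k ⟨r - 1, Nat.sub_lt hr one_pos⟩ = n) (i : ℕ) : kf n k i ≤ n := by
  by_cases h : i < r
  · rcases eq_or_lt_of_le (Nat.le_sub_one_of_lt h) with he | hl
    · rw [kf, dif_pos h, show (⟨i, h⟩ : Fin r) = ⟨r - 1, Nat.sub_lt hr one_pos⟩ from Fin.ext he,
        hlast]
    · rw [kf, dif_pos h]
      exact le_of_lt (hlast ▸ hk (show (⟨i, h⟩ : Fin r) < ⟨r - 1, _⟩ from hl))
  · rw [kf, dif_neg h]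

lemma bd_lt_succ (hr : 0 < r) (hk : StrictMono k) (h1 : 0 < k ⟨0, hr⟩)
    {i : ℕ} (hi : i < r) : bd n k i < bd n k (i + 1) := by
  cases i with
  | zero => simpa [bd, kf, dif_pos hr] using h1
  | succ m => exact kf_lt_kf hk (Nat.lt_succ_self m) hi

lemma bd_lt_bd (hr : 0 < r) (hk : StrictMono k) (h1 : 0 < k ⟨0, hr⟩)
    {i j : ℕ} (hij : i < j) (hj : j ≤ r) : bd n k i < bd n k j := by
  induction j with
  | zero => omega
  | succ m ih =>
    rcases Nat.lt_succ_iff_lt_or_eq.mp hij with h | h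
    · exact lt_trans (ih h (by omega)) (bd_lt_succ hr hk h1 (by omega))
    · exact h ▸ bd_lt_succ hr hk h1 (by omega)

lemma bd_mono (hr : 0 < r) (hk : StrictMono k) (h1 : 0 < k ⟨0, hr⟩)
    {i j : ℕ} (hij : i ≤ j) (hj : j ≤ r) : bd n k i ≤ bd n k j := by
  rcases eq_or_lt_of_le hij with h | h
  · exact h ▸ le_rfl
  · exact le_of_lt (bd_lt_bd hr hk h1 h hj)

lemma bd_r (hr : 0 < r) (hlast : k ⟨r - 1, Nat.sub_lt hr one_pos⟩ = n) : bd n k r = n := by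
  obtain ⟨m, rfl⟩ : ∃ m, r = m + 1 := ⟨r - 1, by omega⟩
  simpa [bd] using kf_rm1 hr hlast

lemma bd_le_n (hr : 0 < r) (hk : StrictMono k)
    (hlast : k ⟨r - 1, Nat.sub_lt hr one_pos⟩ = n) {i : ℕ} : bd n k i ≤ n := by
  cases i with
  | zero => simp [bd]
  | succ m => exact kf_le hr hk hlast m

lemma blk_lt (hr : 0 < r) (hlast : k ⟨r - 1, Nat.sub_lt hr one_pos⟩ = n)
    {a : ℕ} (ha : a < n) : blk n k a < r := by
  have h : blk n k a ≤ r - 1 :=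
    Nat.find_le (Or.inl (show a < kf n k (r-1) by rw [kf_rm1 hr hlast]; exact ha))
  omega

lemma lt_bd_blk_succ (hr : 0 < r) (hlast : k ⟨r - 1, Nat.sub_lt hr one_pos⟩ = n)
    {a : ℕ} (ha : a < n) : a < bd n k (blk n k a + 1) := by
  have h := Nat.find_spec (exists_blk n k a)
  have hblk := blk_lt hr hlast (k := k) ha
  rw [blk] at hblk
  rcases h with h | h
  · exact h
  · omega

lemma bd_blk_le {a : ℕ} : bd n k (blk n k a) ≤ a := by
  rcases h : blk n k a with _ | m
  · simp [bd]
  · rw [blk] at h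
    have := Nat.find_min (exists_blk n k a) (m := m) (by omega)
    push_neg at this
    exact this.1

lemma blk_eq_iff (hr : 0 < r) (hk : StrictMono k) (h1 : 0 < k ⟨0, hr⟩)
    (hlast : k ⟨r - 1, Nat.sub_lt hr one_pos⟩ = n) {a i : ℕ} (ha : a < n) (hi : i < r) :
    blk n k a = i ↔ bd n k i ≤ a ∧ a < bd n k (i + 1) := by
  constructor
  · rintro rfl
    exact ⟨bd_blk_le, lt_bd_blk_succ hr hlast ha⟩
  · rintro ⟨hlo, hhi⟩
    have hle : blk n k a ≤ i := Nat.find_le (Or.inl hhi)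
    rcases eq_or_lt_of_le hle with h | h
    · exact h
    · exfalso
      have h2 := lt_bd_blk_succ hr hlast (k := k) ha
      have h3 : bd n k (blk n k a + 1) ≤ bd n k i := bd_mono hr hk h1 (by omega) (by omega)
      omega

lemma blk_mono {a b : ℕ} (hab : a ≤ b) : blk n k a ≤ blk n k b :=
  Nat.find_mono (fun _ h => h.imp (fun h' => lt_of_le_of_lt hab h') id)

/-- Counting: the number of `a : Fin n` with `lo ≤ a < hi` is `hi - lo`. -/
lemma card_val_ico (n lo hi : ℕ) (hhi : hi ≤ n) :
    (Finset.univ.filter fun a : Fin n => lo ≤ a.val ∧ a.val < hi).card = hi - lo := by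
  have himg : Finset.image Fin.val (Finset.univ.filter fun a : Fin n => lo ≤ a.val ∧ a.val < hi)
      = Finset.Ico lo hi := by
    ext x
    simp only [Finset.mem_image, Finset.mem_filter, Finset.mem_univ, true_and, Finset.mem_Ico]
    constructor
    · rintro ⟨a, ha, rfl⟩; exact ha
    · rintro ⟨h1, h2⟩; exact ⟨⟨x, by omega⟩, ⟨h1, h2⟩, rfl⟩
  calc (Finset.univ.filter fun a : Fin n => lo ≤ a.val ∧ a.val < hi).card
      = (Finset.image Fin.val (Finset.univ.filter fun a : Fin n => lo ≤ a.val ∧ a.val < hi)).card :=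
        (Finset.card_image_of_injective _ Fin.val_injective).symm
    _ = hi - lo := by rw [himg, Nat.card_Ico]

end Basic

/-! ### Partial sums and the inverse construction -/

/-- Partial row sums of a matrix given as `g : ℕ → ℕ → ℕ`. -/
def P (g : ℕ → ℕ → ℕ) (i m : ℕ) : ℕ := ∑ t ∈ Finset.range m, g i t

lemma P_mono (g : ℕ → ℕ → ℕ) (i : ℕ) {m m' : ℕ} (h : m ≤ m') : P g i m ≤ P g i m' :=
  Finset.sum_le_sum_of_subset (Finset.range_subset_range.mpr h)

lemma P_succ (g : ℕ → ℕ → ℕ) (i m : ℕ) : P g i (m + 1) = P g i m + g i m :=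
  Finset.sum_range_succ _ _

lemma exists_jn (r : ℕ) (g : ℕ → ℕ → ℕ) (i t : ℕ) :
    ∃ j, t < P g i (j + 1) ∨ r ≤ j := ⟨r, Or.inr le_rfl⟩

/-- For an offset `t` in block `i`, the index `j` of the segment containing `t`. -/
def jn (r : ℕ) (g : ℕ → ℕ → ℕ) (i t : ℕ) : ℕ := Nat.find (exists_jn r g i t)

section ABlock

variable {r : ℕ} {g : ℕ → ℕ → ℕ} {i t : ℕ}

lemma jn_lt (hr : 0 < r) (ht : t < P g i r) : jn r g i t < r := by
  have h : jn r g i t ≤ r - 1 :=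
    Nat.find_le (Or.inl (by rw [show r - 1 + 1 = r by omega]; exact ht))
  omega

lemma P_jn_le : P g i (jn r g i t) ≤ t := by
  rcases h : jn r g i t with _ | m
  · simp [P]
  · rw [jn] at h
    have := Nat.find_min (exists_jn r g i t) (m := m) (by omega)
    push_neg at this
    exact this.1

lemma lt_P_jn_succ (hr : 0 < r) (ht : t < P g i r) : t < P g i (jn r g i t + 1) := by
  have h := Nat.find_spec (exists_jn r g i t)
  have := jn_lt hr ht
  rw [jn] at this
  rcases h with h | h
  · exact h
  · omega

lemma jn_eq_iff (hr : 0 < r) (ht : t < P g i r) {j : ℕ} (hj : j < r) :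
    jn r g i t = j ↔ P g i j ≤ t ∧ t < P g i (j + 1) := by
  constructor
  · rintro rfl
    exact ⟨P_jn_le, lt_P_jn_succ hr ht⟩
  · rintro ⟨hlo, hhi⟩
    have hle : jn r g i t ≤ j := Nat.find_le (Or.inl hhi)
    rcases eq_or_lt_of_le hle with h | h
    · exact h
    · exfalso
      have h2 := lt_P_jn_succ hr ht (g := g)
      have h3 : P g i (jn r g i t + 1) ≤ P g i j := P_mono g i (by omega)
      omega

end ABlock

/-- The involution associated to a symmetric matrix `g` with row sums equal to block sizes. -/
def fv {r : ℕ} (n : ℕ) (k : Fin r → ℕ) (g : ℕ → ℕ → ℕ) (a : ℕ) : ℕ :=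
  bd n k (jn r g (blk n k a) (a - bd n k (blk n k a)))
    + P g (jn r g (blk n k a) (a - bd n k (blk n k a))) (blk n k a)
    + ((a - bd n k (blk n k a)) - P g (blk n k a) (jn r g (blk n k a) (a - bd n k (blk n k a))))

section E

variable {r n : ℕ} {k : Fin r → ℕ} {g : ℕ → ℕ → ℕ}
  (hr : 0 < r) (hk : StrictMono k) (h1 : 0 < k ⟨0, hr⟩)
  (hlast : k ⟨r - 1, Nat.sub_lt hr one_pos⟩ = n)
  (hsym : ∀ i j, g i j = g j i)
  (hrow : ∀ i, i < r → P g i r = bd n k (i + 1) - bd n k i)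

include hr hk h1 hlast hsym hrow

/-- The key computation: all facts about one application of `fv`. -/
lemma fv_spec {a : ℕ} (ha : a < n) :
    fv n k g a < n ∧
    blk n k (fv n k g a) = jn r g (blk n k a) (a - bd n k (blk n k a)) ∧
    fv n k g (fv n k g a) = a := by
  set i := blk n k a with hi
  set t := a - bd n k i with hht
  have hir : i < r := blk_lt hr hlast ha
  have hbd1 : bd n k i ≤ a := bd_blk_le
  have hbd2 : a < bd n k (i + 1) := lt_bd_blk_succ hr hlast ha
  have htP : t < P g i r := by
    rw [hrow i hir]; omega
  set j := jn r g i t with hj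
  have hjr : j < r := jn_lt hr htP
  have hP1 : P g i j ≤ t := P_jn_le
  have hP2 : t < P g i (j + 1) := lt_P_jn_succ hr htP
  have hP2' : t < P g i j + g i j := by rwa [P_succ] at hP2
  set t' := P g j i + (t - P g i j) with ht'
  have ht'lt : t' < P g j (i + 1) := by
    rw [P_succ]
    have := hsym i j
    omega
  have ht'r : t' < P g j r := lt_of_lt_of_le ht'lt (P_mono g j (by omega))
  have hfveq : fv n k g a = bd n k j + t' := by
    rw [fv, ← hi, ← hht, ← hj, ht']
    ring
  have hfvlt : fv n k g a < bd n k (j + 1) := by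
    rw [hfveq]
    have := hrow j hjr
    have hlt : bd n k j < bd n k (j+1) := bd_lt_succ hr hk h1 hjr
    omega
  have hfvn : fv n k g a < n := lt_of_lt_of_le hfvlt (bd_le_n hr hk hlast)
  have hblkfv : blk n k (fv n k g a) = j := by
    rw [blk_eq_iff hr hk h1 hlast hfvn hjr]
    exact ⟨by rw [hfveq]; omega, hfvlt⟩
  refine ⟨hfvn, hblkfv.trans (by rw [hj]), ?_⟩
  have hofs : fv n k g a - bd n k j = t' := by rw [hfveq]; omega
  have hjn' : jn r g j t' = i := by
    rw [jn_eq_iff hr ht'r hir]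
    exact ⟨by omega, ht'lt⟩
  rw [fv, hblkfv, hofs, hjn']
  omega

end E

section F

variable {r n : ℕ} {k : Fin r → ℕ} {g : ℕ → ℕ → ℕ}
  (hr : 0 < r) (hk : StrictMono k) (h1 : 0 < k ⟨0, hr⟩)
  (hlast : k ⟨r - 1, Nat.sub_lt hr one_pos⟩ = n)
  (hsym : ∀ i j, g i j = g j i)
  (hrow : ∀ i, i < r → P g i r = bd n k (i + 1) - bd n k i)

include hr hk h1 hlast hsym hrow

lemma fv_strict_block {a : ℕ} (ha : a + 1 < n) (hblk : blk n k a = blk n k (a + 1)) :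
    fv n k g a < fv n k g (a + 1) := by
  set i := blk n k a with hi
  have hir : i < r := blk_lt hr hlast (by omega)
  have hbd1 : bd n k i ≤ a := bd_blk_le
  have hbd2 : a + 1 < bd n k (i + 1) := by
    have := lt_bd_blk_succ hr hlast (k := k) (a := a + 1) ha
    rwa [← hblk] at this
  set t := a - bd n k i with hht
  have hsucc : (a + 1) - bd n k i = t + 1 := by omega
  have htP : t + 1 < P g i r := by rw [hrow i hir]; omega
  set j := jn r g i t with hj
  set j' := jn r g i (t + 1) with hj'
  have hjj : j ≤ j' := Nat.find_mono (fun m h => h.imp (fun h' => by omega) id)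
  have hj'r : j' < r := jn_lt hr htP
  have hjP1 : P g i j ≤ t := P_jn_le
  have hjP1' : P g i j' ≤ t + 1 := P_jn_le
  have hfva : fv n k g a = bd n k j + P g j i + (t - P g i j) := by
    rw [fv, ← hi, ← hht, ← hj]
  have hfva' : fv n k g (a + 1) = bd n k j' + P g j' i + (t + 1 - P g i j') := by
    rw [fv, ← hblk, hsucc, ← hj']
  rcases eq_or_lt_of_le hjj with h | h
  · rw [hfva, hfva', ← h]
    omega
  · have htP2 : t < P g i r := by omega
    have hjr : j < r := jn_lt hr htP2
    have hP2 : t < P g i (j + 1) := lt_P_jn_succ hr htP2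
    have hP2' : t < P g i j + g i j := by rwa [P_succ] at hP2
    have hfvlt : fv n k g a < bd n k (j + 1) := by
      rw [hfva]
      have h5 := hrow j hjr
      have h6 := bd_lt_succ (n := n) hr hk h1 hjr
      have hgij := hsym i j
      have h7 : P g j i + g j i ≤ P g j r := by
        rw [← P_succ]; exact P_mono g j (by omega)
      omega
    have hb : bd n k (j + 1) ≤ bd n k j' := bd_mono hr hk h1 (by omega) (by omega)
    rw [hfva']
    omega

end F

/-! ### The matrix of a permutation -/

/-- `Mg n k π i j` = number of positions in block `i` sent by `π` into block `j`. -/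
def Mg {r : ℕ} (n : ℕ) (k : Fin r → ℕ) (π : Equiv.Perm (Fin n)) (i j : ℕ) : ℕ :=
  (Finset.univ.filter fun a : Fin n =>
    blk n k a.val = i ∧ blk n k (π a).val = j).card

section MgL

variable {r n : ℕ} {k : Fin r → ℕ} {π : Equiv.Perm (Fin n)}
  (hr : 0 < r) (hk : StrictMono k) (h1 : 0 < k ⟨0, hr⟩)
  (hlast : k ⟨r - 1, Nat.sub_lt hr one_pos⟩ = n)

lemma Mg_symm (happ : ∀ a, π (π a) = a) (i j : ℕ) : Mg n k π i j = Mg n k π j i := by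
  apply Finset.card_bij' (fun a _ => π a) (fun a _ => π a)
  · intro a ha
    simp only [Finset.mem_filter, Finset.mem_univ, true_and] at ha ⊢
    rw [happ]
    exact ⟨ha.2, ha.1⟩
  · intro a ha
    simp only [Finset.mem_filter, Finset.mem_univ, true_and] at ha ⊢
    rw [happ]
    exact ⟨ha.2, ha.1⟩
  · intro a _; exact happ a
  · intro a _; exact happ a

include hr hk h1 hlast in
lemma Mg_row {i : ℕ} (hi : i < r) :
    P (Mg n k π) i r = bd n k (i + 1) - bd n k i := by
  have hfib : (Finset.univ.filter fun a : Fin n => blk n k a.val = i).card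
      = ∑ t ∈ Finset.range r,
        ((Finset.univ.filter fun a : Fin n => blk n k a.val = i).filter
          fun a => blk n k (π a).val = t).card := by
    apply Finset.card_eq_sum_card_fiberwise
    intro a _
    exact Finset.mem_range.mpr (blk_lt hr hlast (π a).isLt)
  have hP : P (Mg n k π) i r = ∑ t ∈ Finset.range r,
      ((Finset.univ.filter fun a : Fin n => blk n k a.val = i).filter
        fun a => blk n k (π a).val = t).card := by
    rw [P]
    congr 1
    ext t
    rw [Mg, Finset.filter_filter]
  rw [hP, ← hfib]
  have hset : (Finset.univ.filter fun a : Fin n => blk n k a.val = i)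
      = Finset.univ.filter fun a : Fin n => bd n k i ≤ a.val ∧ a.val < bd n k (i + 1) := by
    ext a
    simp only [Finset.mem_filter, Finset.mem_univ, true_and]
    exact blk_eq_iff hr hk h1 hlast a.isLt hi
  rw [hset, card_val_ico n _ _ (bd_le_n hr hk hlast)]

include hr hlast in
lemma Mg_zero {i j : ℕ} (h : r ≤ i ∨ r ≤ j) : Mg n k π i j = 0 := by
  rw [Mg, Finset.card_eq_zero, Finset.filter_eq_empty_iff]
  intro a _
  rintro ⟨hi, hj⟩
  rcases h with h | h
  · exact absurd (hi ▸ blk_lt hr hlast a.isLt) (by omega)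
  · exact absurd (hj ▸ blk_lt hr hlast (π a).isLt) (by omega)

end MgL

section G

variable {r n : ℕ} {k : Fin r → ℕ} {g : ℕ → ℕ → ℕ} {π : Equiv.Perm (Fin n)}
  (hr : 0 < r) (hk : StrictMono k) (h1 : 0 < k ⟨0, hr⟩)
  (hlast : k ⟨r - 1, Nat.sub_lt hr one_pos⟩ = n)
  (hsym : ∀ i j, g i j = g j i)
  (hrow : ∀ i, i < r → P g i r = bd n k (i + 1) - bd n k i)
  (hap : ∀ a : Fin n, ((π a : Fin n) : ℕ) = fv n k g a.val)

include hr hk h1 hlast hsym hrow hap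

lemma Mg_fv {i j : ℕ} (hi : i < r) (hj : j < r) : Mg n k π i j = g i j := by
  have hkey : ∀ a : Fin n,
      (blk n k a.val = i ∧ blk n k (π a).val = j) ↔
      (bd n k i + P g i j ≤ a.val ∧ a.val < bd n k i + P g i (j + 1)) := by
    intro a
    have hspec := fv_spec hr hk h1 hlast hsym hrow (a := a.val) a.isLt
    rw [hap a]
    constructor
    · rintro ⟨hbi, hbj⟩
      rw [hspec.2.1, hbi] at hbj
      have hbd1 : bd n k i ≤ a.val := hbi ▸ bd_blk_le
      have hbd2 : a.val < bd n k (i + 1) := hbi ▸ lt_bd_blk_succ hr hlast a.isLt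
      have htP : a.val - bd n k i < P g i r := by rw [hrow i hi]; omega
      have := (jn_eq_iff hr htP hj).mp hbj
      omega
    · rintro ⟨hlo, hhi⟩
      have hPr : P g i (j + 1) ≤ P g i r := P_mono g i (by omega)
      have hbd2 : a.val < bd n k (i + 1) := by
        have := hrow i hi
        have := bd_lt_succ (n := n) hr hk h1 hi
        omega
      have hbi : blk n k a.val = i :=
        (blk_eq_iff hr hk h1 hlast a.isLt hi).mpr ⟨by omega, hbd2⟩
      have htP : a.val - bd n k i < P g i r := by rw [hrow i hi]; omega
      refine ⟨hbi, ?_⟩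
      rw [hspec.2.1, hbi]
      rw [jn_eq_iff hr htP hj]
      omega
  have hset : (Finset.univ.filter fun a : Fin n =>
      blk n k a.val = i ∧ blk n k (π a).val = j)
      = Finset.univ.filter fun a : Fin n =>
        bd n k i + P g i j ≤ a.val ∧ a.val < bd n k i + P g i (j + 1) := by
    ext a
    simp only [Finset.mem_filter, Finset.mem_univ, true_and]
    exact hkey a
  have hn : bd n k i + P g i (j + 1) ≤ n := by
    have hPr : P g i (j + 1) ≤ P g i r := P_mono g i (by omega)
    have := hrow i hi
    have h2 : bd n k (i+1) ≤ n := bd_le_n hr hk hlast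
    have h3 : bd n k i ≤ bd n k (i+1) := bd_mono hr hk h1 (by omega) (by omega)
    omega
  rw [Mg, hset, card_val_ico n _ _ hn, P_succ]
  omega

end G

/-! ### Recovering an involution from its matrix -/

section H

variable {r n : ℕ} {k : Fin r → ℕ} {π : Equiv.Perm (Fin n)}
  (hr : 0 < r) (hk : StrictMono k) (h1 : 0 < k ⟨0, hr⟩)
  (hlast : k ⟨r - 1, Nat.sub_lt hr one_pos⟩ = n)
  (happ : ∀ a, π (π a) = a)
  (hstep : ∀ a, a + 1 < n → blk n k a = blk n k (a + 1) →
    permVal n π a < permVal n π (a + 1))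

include hr hk h1 hlast hstep in
lemma mono_on_block {i : ℕ} (hi : i < r) :
    ∀ x, bd n k i ≤ x → x + 1 < bd n k (i + 1) → permVal n π x < permVal n π (x + 1) := by
  intro x hx1 hx2
  have hn : bd n k (i + 1) ≤ n := bd_le_n hr hk hlast
  have hbx : blk n k x = i := (blk_eq_iff hr hk h1 hlast (by omega) hi).mpr ⟨hx1, by omega⟩
  have hbx1 : blk n k (x + 1) = i :=
    (blk_eq_iff hr hk h1 hlast (by omega) hi).mpr ⟨by omega, hx2⟩
  exact hstep x (by omega) (hbx.trans hbx1.symm)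

include hr hk h1 hlast happ hstep in
/-- Cumulative count: within block `i`, the positions whose image lies in blocks `≤ j`
are exactly the first `P (Mg n k π) i (j+1)` ones. -/
lemma cum_count {i j : ℕ} (hi : i < r) (hj : j < r) {t : ℕ}
    (ht : t < bd n k (i + 1) - bd n k i) :
    blk n k (permVal n π (bd n k i + t)) ≤ j ↔ t < P (Mg n k π) i (j + 1) := by
  have hn : bd n k (i + 1) ≤ n := bd_le_n hr hk hlast
  have hmm : bd n k i ≤ bd n k (i + 1) := bd_mono hr hk h1 (by omega) (by omega)
  set sz := bd n k (i + 1) - bd n k i with hsz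
  set F := permVal n π with hF
  -- the downward-closed set
  set D := (Finset.range sz).filter (fun t => blk n k (F (bd n k i + t)) ≤ j) with hD
  have hdc : ∀ a b : ℕ, a ≤ b → b ∈ D → a ∈ D := by
    intro a b hab hb
    rw [hD, Finset.mem_filter, Finset.mem_range] at hb ⊢
    refine ⟨by omega, ?_⟩
    have hle : F (bd n k i + a) ≤ F (bd n k i + b) := by
      have := chain F (bd n k i) sz (by
        intro x hx1 hx2
        exact mono_on_block hr hk h1 hlast hstep hi x hx1 (by omega))
        (bd n k i + a) (bd n k i + b) (by omega) (by omega) (by omega)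
      omega
    exact le_trans (blk_mono hle) hb.2
  -- computing the cardinality of D
  have hcard : D.card = P (Mg n k π) i (j + 1) := by
    have hbij : D.card = (Finset.univ.filter fun a : Fin n =>
        blk n k a.val = i ∧ blk n k (π a).val ≤ j).card := by
      refine Finset.card_bij' (fun t ht => (⟨bd n k i + t, by
          rw [hD, Finset.mem_filter, Finset.mem_range] at ht; omega⟩ : Fin n))
        (fun a _ => a.val - bd n k i) ?mapsto ?mapsfrom ?linv ?rinv
      case mapsto =>
        intro t htmem
        rw [hD, Finset.mem_filter, Finset.mem_range] at htmem
        simp only [Finset.mem_filter, Finset.mem_univ, true_and]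
        constructor
        · exact (blk_eq_iff hr hk h1 hlast (by omega) hi).mpr ⟨by omega, by omega⟩
        · have := htmem.2
          rwa [hF, permVal, dif_pos (show bd n k i + t < n by omega)] at this
      case mapsfrom =>
        intro a ha
        simp only [Finset.mem_filter, Finset.mem_univ, true_and] at ha
        have h3 : bd n k i ≤ a.val ∧ a.val < bd n k (i + 1) :=
          (blk_eq_iff hr hk h1 hlast a.isLt hi).mp ha.1
        rw [hD, Finset.mem_filter, Finset.mem_range]
        beta_reduce
        refine ⟨by omega, ?_⟩
        rw [hF, permVal, dif_pos (show bd n k i + (a.val - bd n k i) < n by omega)]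
        have he : (⟨bd n k i + (a.val - bd n k i), by omega⟩ : Fin n) = a := by
          apply Fin.ext; simp; omega
        rw [he]
        exact ha.2
      case linv =>
        intro t htmem
        simp only [Fin.val_mk]
        beta_reduce
        omega
      case rinv =>
        intro a ha
        simp only [Finset.mem_filter, Finset.mem_univ, true_and] at ha
        have h3 : bd n k i ≤ a.val ∧ a.val < bd n k (i + 1) :=
          (blk_eq_iff hr hk h1 hlast a.isLt hi).mp ha.1
        apply Fin.ext
        simp only [Fin.val_mk]
        beta_reduce
        omega
    rw [hbij]
    have hfib : (Finset.univ.filter fun a : Fin n =>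
        blk n k a.val = i ∧ blk n k (π a).val ≤ j).card
        = ∑ u ∈ Finset.range (j + 1),
          ((Finset.univ.filter fun a : Fin n =>
            blk n k a.val = i ∧ blk n k (π a).val ≤ j).filter
              fun a => blk n k (π a).val = u).card := by
      apply Finset.card_eq_sum_card_fiberwise
      intro a ha
      simp only [Finset.mem_coe, Finset.mem_filter, Finset.mem_univ, true_and] at ha
      exact Finset.mem_range.mpr (by beta_reduce; omega)
    rw [hfib, P]
    apply Finset.sum_congr rfl
    intro u hu
    rw [Finset.mem_range] at hu
    rw [Mg]
    congr 1
    ext a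
    simp only [Finset.mem_filter, Finset.mem_univ, true_and]
    constructor
    · rintro ⟨⟨ha1, _⟩, ha3⟩; exact ⟨ha1, ha3⟩
    · rintro ⟨ha1, ha2⟩; exact ⟨⟨ha1, by omega⟩, ha2⟩
  have hrange : D = Finset.range (P (Mg n k π) i (j + 1)) := by
    rw [← hcard]; exact dclosed_eq_range D hdc
  constructor
  · intro hle
    have : t ∈ D := by rw [hD, Finset.mem_filter, Finset.mem_range]; exact ⟨ht, hle⟩
    rw [hrange, Finset.mem_range] at this
    exact this
  · intro hlt
    have : t ∈ D := by rw [hrange, Finset.mem_range]; exact hlt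
    rw [hD, Finset.mem_filter] at this
    exact this.2

end H

section H2

variable {r n : ℕ} {k : Fin r → ℕ} {π : Equiv.Perm (Fin n)}
  (hr : 0 < r) (hk : StrictMono k) (h1 : 0 < k ⟨0, hr⟩)
  (hlast : k ⟨r - 1, Nat.sub_lt hr one_pos⟩ = n)
  (happ : ∀ a, π (π a) = a)
  (hstep : ∀ a, a + 1 < n → blk n k a = blk n k (a + 1) →
    permVal n π a < permVal n π (a + 1))

include hr hk h1 hlast happ hstep in
/-- An involution whose descents are block boundaries is recovered from its matrix. -/
lemma pi_eq_fv (a : Fin n) : ((π a : Fin n) : ℕ) = fv n k (Mg n k π) a.val := by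
  set g := Mg n k π with hg
  have hrowg : ∀ i', i' < r → P g i' r = bd n k (i' + 1) - bd n k i' :=
    fun i' h => Mg_row hr hk h1 hlast h
  have hsymg : ∀ p q, g p q = g q p := fun p q => Mg_symm happ p q
  have hFgen : ∀ x : Fin n, permVal n π x.val = ((π x : Fin n) : ℕ) := by
    intro x
    rw [permVal, dif_pos x.isLt]
  -- the general cumulative-count fact, for any position x
  have hcum : ∀ (x : Fin n) (j' : ℕ), j' < r →
      (blk n k ((π x : Fin n) : ℕ) ≤ j' ↔
        x.val - bd n k (blk n k x.val) < P g (blk n k x.val) (j' + 1)) := by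
    intro x j' hj'
    set ix := blk n k x.val with hix
    have hixr : ix < r := blk_lt hr hlast x.isLt
    have hb1 : bd n k ix ≤ x.val := bd_blk_le
    have hb2 : x.val < bd n k (ix + 1) := lt_bd_blk_succ hr hlast x.isLt
    have := cum_count hr hk h1 hlast happ hstep hixr hj'
      (t := x.val - bd n k ix) (by omega)
    rwa [show bd n k ix + (x.val - bd n k ix) = x.val by omega, hFgen x] at this
  -- notation for this particular a
  set i := blk n k a.val with hi
  have hir : i < r := blk_lt hr hlast a.isLt
  have hbd1 : bd n k i ≤ a.val := bd_blk_le
  have hbd2 : a.val < bd n k (i + 1) := lt_bd_blk_succ hr hlast a.isLt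
  set t := a.val - bd n k i with hht
  have htP : t < P g i r := by rw [hrowg i hir]; omega
  set j := blk n k ((π a : Fin n) : ℕ) with hj
  have hjr : j < r := blk_lt hr hlast (π a).isLt
  -- Step B : identify jn
  have hjlo : P g i j ≤ t := by
    rcases Nat.eq_zero_or_pos j with h0 | h0
    · simp [h0, P]
    · have hc := hcum a (j - 1) (by omega)
      rw [← hi, ← hht, show j - 1 + 1 = j by omega] at hc
      have h2 : ¬ blk n k ((π a : Fin n) : ℕ) ≤ j - 1 := by omega
      rw [hc] at h2
      omega
  have hjhi : t < P g i (j + 1) := by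
    have hc := hcum a j hjr
    rw [← hi, ← hht] at hc
    exact hc.mp le_rfl
  have hjn : jn r g i t = j := (jn_eq_iff hr htP hjr).mpr ⟨hjlo, hjhi⟩
  -- Step C : the shift argument
  set lo := bd n k i + P g i j with hlo
  set m := g i j with hm
  set lo' := bd n k j + P g j i with hlo'
  have hlom : lo + m = bd n k i + P g i (j + 1) := by rw [P_succ]; omega
  have hPsz : P g i (j + 1) ≤ P g i r := P_mono g i (by omega)
  have hbdi1 : lo + m ≤ bd n k (i + 1) := by
    rw [hlom, hrowg i hir] at *
    omega
  have hmono : ∀ x, lo ≤ x → x + 1 < lo + m → permVal n π x < permVal n π (x + 1) := by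
    intro x hx1 hx2
    exact mono_on_block hr hk h1 hlast hstep hir x (by omega) (by omega)
  have hbn : bd n k (i + 1) ≤ n := bd_le_n hr hk hlast
  have hrange : ∀ x, lo ≤ x → x < lo + m →
      lo' ≤ permVal n π x ∧ permVal n π x < lo' + m := by
    intro x hx1 hx2
    have hxn : x < n := by omega
    set ax : Fin n := ⟨x, hxn⟩ with hax
    have haxv : (ax : ℕ) = x := rfl
    have hbx : blk n k ax.val = i :=
      (blk_eq_iff hr hk h1 hlast hxn hir).mpr ⟨by omega, by omega⟩
    have htx1 : P g i j ≤ ax.val - bd n k i := by omega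
    have htx2 : ax.val - bd n k i < P g i (j + 1) := by omega
    -- the block of π ax is j
    have hbpx : blk n k ((π ax : Fin n) : ℕ) = j := by
      have hle : blk n k ((π ax : Fin n) : ℕ) ≤ j := by
        have hc := hcum ax j hjr
        rw [hbx] at hc
        exact hc.mpr htx2
      rcases Nat.eq_zero_or_pos j with h0 | h0
      · omega
      · have hc := hcum ax (j - 1) (by omega)
        rw [hbx, show j - 1 + 1 = j by omega] at hc
        by_contra hne
        have : blk n k ((π ax : Fin n) : ℕ) ≤ j - 1 := by omega
        have := hc.mp this
        omega
    -- offset of π ax within block j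
    have hub1 : bd n k j ≤ ((π ax : Fin n) : ℕ) := hbpx ▸ bd_blk_le
    have hub2 : ((π ax : Fin n) : ℕ) < bd n k (j + 1) :=
      hbpx ▸ lt_bd_blk_succ hr hlast (π ax).isLt
    set u := ((π ax : Fin n) : ℕ) - bd n k j with hu
    -- apply cum_count in row j at position π ax, using π (π ax) = ax
    have hcux : ∀ i', i' < r →
        (i ≤ i' ↔ u < P g j (i' + 1)) := by
      intro i' hi'
      have hc := hcum (π ax) i' hi'
      rw [hbpx, happ ax, hbx] at hc
      rw [← hu] at hc
      exact hc
    have hulo : P g j i ≤ u := by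
      rcases Nat.eq_zero_or_pos i with h0 | h0
      · simp [h0, P]
      · have hc := hcux (i - 1) (by omega)
        rw [show i - 1 + 1 = i by omega] at hc
        have h2 : ¬ i ≤ i - 1 := by omega
        rw [hc] at h2
        omega
    have huhi : u < P g j (i + 1) := (hcux i hir).mp le_rfl
    have huhi' : u < P g j i + g j i := by rwa [P_succ] at huhi
    have hFx : permVal n π x = bd n k j + u := by
      rw [show x = ax.val from rfl, hFgen ax]
      omega
    rw [hFx]
    have := hsymg i j
    constructor <;> omega
  have hshift := shift (permVal n π) lo lo' m hmono hrange a.val (by omega)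
    (by rw [hlom]; omega)
  have hfv : fv n k g a.val = bd n k j + P g j i + (t - P g i j) := by
    rw [fv, ← hi, ← hht, hjn]
  rw [hfv, ← hFgen a, hshift]
  omega

end H2

/-! ### Descents vs blocks -/

section Des

variable {r n : ℕ} {k : Fin r → ℕ} {π : Equiv.Perm (Fin n)}
  (hr : 0 < r) (hk : StrictMono k) (h1 : 0 < k ⟨0, hr⟩)
  (hlast : k ⟨r - 1, Nat.sub_lt hr one_pos⟩ = n)

include hr hlast in
lemma blk_pred_eq {x : ℕ} (hx0 : 0 < x) (hxn : x < n)
    (hnot : ∀ j : Fin r, k j ≠ x) : blk n k (x - 1) = blk n k x := by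
  have hle : blk n k (x - 1) ≤ blk n k x := blk_mono (by omega)
  rcases eq_or_lt_of_le hle with h | hlt
  · exact h
  · exfalso
    have h2 : x - 1 < bd n k (blk n k (x - 1) + 1) := lt_bd_blk_succ hr hlast (by omega)
    have hmin := Nat.find_min (exists_blk n k x) hlt
    push_neg at hmin
    obtain ⟨hge, hltr⟩ := hmin
    have h3 : bd n k (blk n k (x - 1) + 1) = kf n k (blk n k (x - 1)) := rfl
    rw [h3] at h2
    have h4 : kf n k (blk n k (x - 1)) = x := by omega
    rw [kf, dif_pos hltr] at h4
    exact hnot _ h4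

include hr hk hlast in
lemma step_of_des (hdes : descentSet n π ⊆ Finset.univ.image k) :
    ∀ a, a + 1 < n → blk n k a = blk n k (a + 1) →
      permVal n π a < permVal n π (a + 1) := by
  intro a ha hblk
  by_contra hge
  push_neg at hge
  have hne : permVal n π (a + 1) ≠ permVal n π a := by
    rw [permVal, permVal, dif_pos (show a + 1 < n by omega), dif_pos (show a < n by omega)]
    intro he
    have := π.injective (Fin.ext (a := π ⟨a + 1, by omega⟩) (b := π ⟨a, by omega⟩) he)
    simp only [Fin.mk.injEq] at this
    omega
  have hmem : a + 1 ∈ descentSet n π := by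
    rw [descentSet, Finset.mem_insert]
    right
    rw [Finset.mem_filter, Finset.mem_Ico]
    refine ⟨⟨by omega, by omega⟩, ?_⟩
    rw [show a + 1 - 1 = a by omega]
    omega
  obtain ⟨j, _, hjv⟩ := Finset.mem_image.mp (hdes hmem)
  have hkfj : kf n k j.val = a + 1 := by
    rw [kf, dif_pos j.isLt, Fin.eta]; exact hjv
  have hblka : blk n k a ≤ j.val := Nat.find_le (Or.inl (by rw [hkfj]; omega))
  have h2 : a + 1 < bd n k (blk n k (a + 1) + 1) := lt_bd_blk_succ hr hlast ha
  rw [← hblk] at h2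
  have h3 : bd n k (blk n k a + 1) = kf n k (blk n k a) := rfl
  rw [h3] at h2
  rcases eq_or_lt_of_le hblka with h | h
  · rw [h, hkfj] at h2
    omega
  · have h4 : kf n k (blk n k a) < kf n k j.val := kf_lt_kf hk h j.isLt
    rw [hkfj] at h4
    omega

end Des

/-! ### The constructed involution -/

/-- The `Fin n`-valued version of `fv`. -/
def fvF {r : ℕ} (n : ℕ) (k : Fin r → ℕ) (g : ℕ → ℕ → ℕ) (a : Fin n) : Fin n :=
  if h : fv n k g a.val < n then ⟨fv n k g a.val, h⟩ else a

section Con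

variable {r n : ℕ} {k : Fin r → ℕ} {g : ℕ → ℕ → ℕ}
  (hr : 0 < r) (hk : StrictMono k) (h1 : 0 < k ⟨0, hr⟩)
  (hlast : k ⟨r - 1, Nat.sub_lt hr one_pos⟩ = n)
  (hsym : ∀ i j, g i j = g j i)
  (hrow : ∀ i, i < r → P g i r = bd n k (i + 1) - bd n k i)

include hr hk h1 hlast hsym hrow

lemma fvF_val (a : Fin n) : (fvF n k g a).val = fv n k g a.val := by
  obtain ⟨ha1, _, _⟩ := fv_spec hr hk h1 hlast hsym hrow a.isLt
  rw [fvF, dif_pos ha1]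

lemma fvF_invol : Function.Involutive (fvF n k g) := by
  intro a
  apply Fin.ext
  rw [fvF_val hr hk h1 hlast hsym hrow, fvF_val hr hk h1 hlast hsym hrow]
  exact (fv_spec hr hk h1 hlast hsym hrow a.isLt).2.2

/-- The descent set of a permutation realizing `fv` is contained in `K`. -/
lemma des_of_fv {π : Equiv.Perm (Fin n)}
    (hap : ∀ a : Fin n, ((π a : Fin n) : ℕ) = fv n k g a.val) :
    descentSet n π ⊆ Finset.univ.image k := by
  intro x hx
  rw [descentSet, Finset.mem_insert] at hx
  rcases hx with rfl | hx
  · exact Finset.mem_image.mpr ⟨⟨r - 1, Nat.sub_lt hr one_pos⟩, Finset.mem_univ _, hlast⟩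
  · rw [Finset.mem_filter, Finset.mem_Ico] at hx
    obtain ⟨⟨hx1, hx2⟩, hdesc⟩ := hx
    by_contra hnot
    have hnot' : ∀ j : Fin r, k j ≠ x := by
      intro j hj
      exact hnot (Finset.mem_image.mpr ⟨j, Finset.mem_univ _, hj⟩)
    have hblk : blk n k (x - 1) = blk n k x := blk_pred_eq hr hlast (by omega) hx2 hnot'
    have hlt := fv_strict_block hr hk h1 hlast hsym hrow (a := x - 1) (by omega)
      (by rw [show x - 1 + 1 = x by omega]; exact hblk)
    rw [show x - 1 + 1 = x by omega] at hlt
    have e1 : permVal n π x = fv n k g x := by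
      rw [permVal, dif_pos hx2]; exact hap ⟨x, hx2⟩
    have e2 : permVal n π (x - 1) = fv n k g (x - 1) := by
      rw [permVal, dif_pos (show x - 1 < n by omega)]; exact hap ⟨x - 1, by omega⟩
    omega

end Con

lemma sq_iff {n : ℕ} (π : Equiv.Perm (Fin n)) : π ^ 2 = 1 ↔ ∀ a, π (π a) = a := by
  rw [sq]
  constructor
  · intro h a
    have := Equiv.ext_iff.mp h a
    simpa [Equiv.Perm.mul_apply] using this
  · intro h
    ext a
    simp [Equiv.Perm.mul_apply, h a]

end S6


open S6 in
/-- The number of involutions in `S_n` with descent set contained in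
`K = {k₁ < k₂ < ⋯ < k_r = n}` equals the number of symmetric `r × r` matrices
with nonnegative integer entries whose `i`-th row sum is `kᵢ - kᵢ₋₁` (with `k₀ = 0`). -/
theorem stmt6 (n r : ℕ) (hr : 0 < r) (k : Fin r → ℕ) (hk : StrictMono k)
    (h1 : 0 < k ⟨0, hr⟩) (hlast : k ⟨r - 1, by omega⟩ = n) :
    Nat.card {π : Equiv.Perm (Fin n) //
        π ^ 2 = 1 ∧ descentSet n π ⊆ Finset.univ.image k} =
      Nat.card {X : Matrix (Fin r) (Fin r) ℕ // X.IsSymm ∧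
        ∀ i : Fin r, ∑ j, X i j =
          k i - (if h : i.val = 0 then 0
            else k ⟨i.val - 1, Nat.lt_of_le_of_lt (Nat.sub_le _ _) i.isLt⟩)} := by
  have hlast' : k ⟨r - 1, Nat.sub_lt hr one_pos⟩ = n := hlast
  have hbs : ∀ i : Fin r, bd n k (i.val + 1) = k i := by
    intro i
    show kf n k i.val = k i
    rw [kf, dif_pos i.isLt, Fin.eta]
  have hbd : ∀ i : Fin r, bd n k i.val =
      (if h : i.val = 0 then 0
        else k ⟨i.val - 1, Nat.lt_of_le_of_lt (Nat.sub_le _ _) i.isLt⟩) := by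
    intro i
    by_cases hz : i.val = 0
    · rw [dif_pos hz, hz]
      rfl
    · rw [dif_neg hz]
      have hm : i.val = (i.val - 1) + 1 := by omega
      conv_lhs => rw [hm]
      show kf n k (i.val - 1) = _
      rw [kf, dif_pos (show i.val - 1 < r from Nat.lt_of_le_of_lt (Nat.sub_le _ _) i.isLt)]
  have hsymm : ∀ π : Equiv.Perm (Fin n), π ^ 2 = 1 →
      (Matrix.of fun i j : Fin r => Mg n k π i.val j.val).IsSymm := by
    intro π hπ
    have happ := (sq_iff π).mp hπ
    apply Matrix.ext
    intro i j
    rw [Matrix.transpose_apply]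
    exact Mg_symm happ _ _
  have hrowsum : ∀ π : Equiv.Perm (Fin n),
      ∀ i : Fin r, ∑ j, (Matrix.of fun i j : Fin r => Mg n k π i.val j.val) i j =
        k i - (if h : i.val = 0 then 0
          else k ⟨i.val - 1, Nat.lt_of_le_of_lt (Nat.sub_le _ _) i.isLt⟩) := by
    intro π i
    have hsum : ∑ j, (Matrix.of fun i j : Fin r => Mg n k π i.val j.val) i j
        = P (Mg n k π) i.val r := by
      rw [P, ← Fin.sum_univ_eq_sum_range (fun t => Mg n k π i.val t) r]
      rfl
    rw [hsum, Mg_row hr hk h1 hlast' i.isLt, hbs i, hbd i]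
  refine Nat.card_congr (Equiv.ofBijective (fun p =>
    ⟨Matrix.of (fun i j : Fin r => Mg n k p.1 i.val j.val),
      hsymm p.1 p.2.1, hrowsum p.1⟩) ⟨?_, ?_⟩)
  · -- injectivity
    rintro ⟨π₁, hs1, hd1⟩ ⟨π₂, hs2, hd2⟩ he
    have heM := Subtype.ext_iff.mp he
    simp only at heM
    have hM : Mg n k π₁ = Mg n k π₂ := by
      funext i j
      by_cases hij : i < r ∧ j < r
      · have := congrFun (congrFun heM ⟨i, hij.1⟩) ⟨j, hij.2⟩
        simpa using this
      · have h' : r ≤ i ∨ r ≤ j := by omega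
        rw [Mg_zero hr hlast' h', Mg_zero hr hlast' h']
    apply Subtype.ext
    apply Equiv.ext
    intro a
    apply Fin.ext
    have e1 := pi_eq_fv hr hk h1 hlast' ((sq_iff π₁).mp hs1)
      (step_of_des hr hk hlast' hd1) a
    have e2 := pi_eq_fv hr hk h1 hlast' ((sq_iff π₂).mp hs2)
      (step_of_des hr hk hlast' hd2) a
    show (π₁ a).val = (π₂ a).val
    rw [e1, e2, hM]
  · -- surjectivity
    rintro ⟨X, hXs, hXr⟩
    set g : ℕ → ℕ → ℕ :=
      fun i j => if h : i < r ∧ j < r then X ⟨i, h.1⟩ ⟨j, h.2⟩ else 0 with hgdef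
    have hgs : ∀ i j, g i j = g j i := by
      intro i j
      by_cases hij : i < r ∧ j < r
      · show dite _ _ _ = dite _ _ _
        rw [dif_pos hij, dif_pos (show j < r ∧ i < r from ⟨hij.2, hij.1⟩)]
        have := congrFun (congrFun hXs ⟨j, hij.2⟩) ⟨i, hij.1⟩
        rw [Matrix.transpose_apply] at this
        exact this
      · show dite _ _ _ = dite _ _ _
        rw [dif_neg hij, dif_neg (show ¬(j < r ∧ i < r) from fun hc => hij ⟨hc.2, hc.1⟩)]
    have hrowg : ∀ i, i < r → P g i r = bd n k (i + 1) - bd n k i := by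
      intro i hi
      have hsum : P g i r = ∑ j, X ⟨i, hi⟩ j := by
        rw [P, ← Fin.sum_univ_eq_sum_range (fun t => g i t) r]
        apply Finset.sum_congr rfl
        intro j _
        show dite _ _ _ = _
        rw [dif_pos (show i < r ∧ (j : ℕ) < r from ⟨hi, j.isLt⟩)]
      rw [hsum, hXr ⟨i, hi⟩, ← hbs ⟨i, hi⟩, ← hbd ⟨i, hi⟩]
    have hinv := fvF_invol hr hk h1 hlast' hgs hrowg
    have hap : ∀ a : Fin n, ((Function.Involutive.toPerm _ hinv) a : ℕ) = fv n k g a.val :=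
      fun a => fvF_val hr hk h1 hlast' hgs hrowg a
    refine ⟨⟨Function.Involutive.toPerm _ hinv, ?_, ?_⟩, ?_⟩
    · rw [sq_iff]
      intro a
      exact hinv a
    · exact des_of_fv hr hk h1 hlast' hgs hrowg hap
    · apply Subtype.ext
      show Matrix.of _ = X
      apply Matrix.ext
      intro i j
      show Mg n k _ i.val j.val = X i j
      rw [Mg_fv hr hk h1 hlast' hgs hrowg hap i.isLt j.isLt]
      show dite _ _ _ = _
      rw [dif_pos (show (i : ℕ) < r ∧ (j : ℕ) < r from ⟨i.isLt, j.isLt⟩)]
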